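/- Converse direction of the iterated-conditional characterization: if P(H) > 0, P(K) > 0, P(A∩H) > 0, and the iterated conditional satisfies ⟦(B|K)|(A|H)⟧(ω) = 1 for every ω ∈ Ω, then P(A|H) ≤ P(B|K). -/

import Mathlib

open MeasureTheory Set
open scoped Classical

noncomputable section

variable {Ω : Type*} [MeasurableSpace Ω]

/-- Indicator (with values in `ℝ`) of a set. -/
def ind (A : Set Ω) : Ω → ℝ := A.indicator 1

/-- Conditional probability `P(A|H) = P(A ∩ H)/P(H)`. -/
def condProb (P : Measure Ω) (A H : Set Ω) : ℝ :=
  (P (A ∩ H)).toReal / (P H).toReal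

/-- The (indicator of the) conditional event `A|H`,
`⟦A|H⟧ = 1_{A∩H} + P(A|H)·1_{Hᶜ}`. -/
def condEvent (P : Measure Ω) (A H : Set Ω) : Ω → ℝ :=
  fun ω => ind (A ∩ H) ω + condProb P A H * ind Hᶜ ω

/-- The prevision `z` of the conjunction `(A|H) ∧ (B|K)`:
`z = E[min(⟦A|H⟧, ⟦B|K⟧)·1_{H∪K}]/P(H∪K)`. -/
def conjPrev (P : Measure Ω) (A H B K : Set Ω) : ℝ :=
  (∫ ω, min (condEvent P A H ω) (condEvent P B K ω) * ind (H ∪ K) ω ∂P) /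
    (P (H ∪ K)).toReal

/-- The conjunction `⟦(A|H) ∧ (B|K)⟧ = min(⟦A|H⟧, ⟦B|K⟧)·1_{H∪K} + z·1_{(H∪K)ᶜ}`. -/
def conjCE (P : Measure Ω) (A H B K : Set Ω) : Ω → ℝ :=
  fun ω => min (condEvent P A H ω) (condEvent P B K ω) * ind (H ∪ K) ω
    + conjPrev P A H B K * ind (H ∪ K)ᶜ ω

/-- The iterated conditional `⟦(B|K)|(A|H)⟧ = ⟦(A|H)∧(B|K)⟧ + μ·(1 − ⟦A|H⟧)`,
with `μ = z / P(A|H)`. -/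
def iterCond (P : Measure Ω) (A H B K : Set Ω) : Ω → ℝ :=
  fun ω => conjCE P A H B K ω +
    (conjPrev P A H B K / condProb P A H) * (1 - condEvent P A H ω)

/-- Goodman–Nguyen logical implication between conditional events:
`A|H ⊑ B|K` iff `A∩H ⊆ B∩K` and `Bᶜ∩K ⊆ Aᶜ∩H`. -/
def GNle (A H B K : Set Ω) : Prop := A ∩ H ⊆ B ∩ K ∧ Bᶜ ∩ K ⊆ Aᶜ ∩ H

/-! Write `p = P(A|H)` and `z` for the prevision of `(A|H) ∧ (B|K)`. Taking expectations,
`E⟦A|H⟧ = p` and `E⟦(A|H) ∧ (B|K)⟧ = z`, so `E⟦(B|K)|(A|H)⟧ = z + (z/p)(1 - p) = z/p`; if the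
iterated conditional is constantly `1`, then `z = p`. On the other hand
`min(⟦A|H⟧, ⟦B|K⟧) ≤ ⟦B|K⟧` and `E[⟦B|K⟧ 1_{H∪K}] = P(B|K) P(H∪K)` because `K ⊆ H ∪ K`,
so `z ≤ P(B|K)`. -/

section Lemmas

variable {P : Measure Ω} {A H B K S : Set Ω}

omit [MeasurableSpace Ω] in
lemma ind_mul_ind (S T : Set Ω) (ω : Ω) : ind S ω * ind T ω = ind (S ∩ T) ω := by
  by_cases hS : ω ∈ S <;> by_cases hT : ω ∈ T <;> simp [ind, hS, hT]

omit [MeasurableSpace Ω] in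
lemma mul_ind_eq_indicator (f : Ω → ℝ) (S : Set Ω) :
    (fun ω => f ω * ind S ω) = S.indicator f := by
  funext ω; by_cases h : ω ∈ S <;> simp [ind, h]

lemma integral_ind (hS : MeasurableSet S) : ∫ ω, ind S ω ∂P = P.real S :=
  integral_indicator_one hS

lemma integrable_ind [IsFiniteMeasure P] (hS : MeasurableSet S) : Integrable (ind S) P :=
  (integrable_const (1 : ℝ)).indicator hS

lemma integrable_condEvent [IsFiniteMeasure P] (hA : MeasurableSet A) (hH : MeasurableSet H) :
    Integrable (condEvent P A H) P :=
  (integrable_ind (hA.inter hH)).add ((integrable_ind hH.compl).const_mul _)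

lemma measureReal_inter_eq_condProb_mul [IsFiniteMeasure P] (A H : Set Ω) :
    P.real (A ∩ H) = condProb P A H * P.real H := by
  by_cases h0 : P.real H = 0
  · rw [h0, mul_zero]
    exact le_antisymm (h0 ▸ measureReal_mono inter_subset_right) measureReal_nonneg
  · exact (div_mul_cancel₀ _ h0).symm

lemma condProb_pos [IsFiniteMeasure P] (hAH : 0 < P (A ∩ H)) : 0 < condProb P A H :=
  div_pos (ENNReal.toReal_pos hAH.ne' (measure_ne_top P _))
    (ENNReal.toReal_pos (hAH.trans_le (measure_mono inter_subset_right)).ne'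
      (measure_ne_top P _))

lemma integral_condEvent_mul_ind [IsFiniteMeasure P] (hA : MeasurableSet A)
    (hH : MeasurableSet H) (hS : MeasurableSet S) (hHS : H ⊆ S) :
    ∫ ω, condEvent P A H ω * ind S ω ∂P = condProb P A H * P.real S := by
  have hpointwise : (fun ω => condEvent P A H ω * ind S ω) =
      fun ω => ind (A ∩ H) ω + condProb P A H * ind (S \ H) ω := by
    funext ω
    rw [condEvent, add_mul, mul_assoc, ind_mul_ind, ind_mul_ind,
      inter_eq_left.mpr (inter_subset_right.trans hHS), inter_comm Hᶜ, ← sdiff_eq]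
  rw [hpointwise, integral_add (integrable_ind (hA.inter hH))
      ((integrable_ind (hS.diff hH)).const_mul _), integral_const_mul,
    integral_ind (hA.inter hH), integral_ind (hS.diff hH),
    measureReal_inter_eq_condProb_mul, ← measureReal_inter_add_sdiff hH (μ := P) (s := S),
    inter_eq_right.mpr hHS]
  ring

lemma integral_condEvent [IsProbabilityMeasure P] (hA : MeasurableSet A) (hH : MeasurableSet H) :
    ∫ ω, condEvent P A H ω ∂P = condProb P A H := by
  simpa [ind] using integral_condEvent_mul_ind (P := P) hA hH MeasurableSet.univ (subset_univ H)

lemma condProb_nonneg (P : Measure Ω) (A H : Set Ω) : 0 ≤ condProb P A H :=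
  div_nonneg ENNReal.toReal_nonneg ENNReal.toReal_nonneg

lemma integrable_min_condEvent_mul_ind [IsFiniteMeasure P] (hA : MeasurableSet A)
    (hH : MeasurableSet H) (hB : MeasurableSet B) (hK : MeasurableSet K) (hS : MeasurableSet S) :
    Integrable (fun ω => min (condEvent P A H ω) (condEvent P B K ω) * ind S ω) P := by
  rw [mul_ind_eq_indicator]
  exact ((integrable_condEvent hA hH).inf (integrable_condEvent hB hK)).indicator hS

lemma integral_mul_ind_div_mul_measureReal [IsFiniteMeasure P] (f : Ω → ℝ)
    (hS : MeasurableSet S) :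
    (∫ ω, f ω * ind S ω ∂P) / P.real S * P.real S = ∫ ω, f ω * ind S ω ∂P := by
  by_cases h0 : P.real S = 0
  · rw [mul_ind_eq_indicator, integral_indicator hS,
      setIntegral_measure_zero _ ((measureReal_eq_zero_iff).mp h0)]
    simp
  · exact div_mul_cancel₀ _ h0

lemma integral_conjCE [IsProbabilityMeasure P] (hA : MeasurableSet A) (hH : MeasurableSet H)
    (hB : MeasurableSet B) (hK : MeasurableSet K) :
    ∫ ω, conjCE P A H B K ω ∂P = conjPrev P A H B K := by
  have hHK := hH.union hK
  have hmin : ∫ ω, min (condEvent P A H ω) (condEvent P B K ω) * ind (H ∪ K) ω ∂P =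
      conjPrev P A H B K * P.real (H ∪ K) :=
    (integral_mul_ind_div_mul_measureReal _ hHK).symm
  unfold conjCE
  rw [integral_add (integrable_min_condEvent_mul_ind hA hH hB hK hHK)
      ((integrable_ind hHK.compl).const_mul _), integral_const_mul, hmin,
    integral_ind hHK.compl, probReal_compl_eq_one_sub hHK]
  ring

lemma integral_iterCond [IsProbabilityMeasure P] (hA : MeasurableSet A) (hH : MeasurableSet H)
    (hB : MeasurableSet B) (hK : MeasurableSet K) (hp : condProb P A H ≠ 0) :
    ∫ ω, iterCond P A H B K ω ∂P = conjPrev P A H B K / condProb P A H := by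
  have hx := integrable_condEvent (P := P) hA hH
  have hx' : Integrable (fun ω => 1 - condEvent P A H ω) P := (integrable_const 1).sub hx
  have hconj : Integrable (conjCE P A H B K) P :=
    (integrable_min_condEvent_mul_ind hA hH hB hK (hH.union hK)).add
      ((integrable_ind (hH.union hK).compl).const_mul _)
  unfold iterCond
  rw [integral_add hconj (hx'.const_mul _), integral_const_mul,
    integral_sub (integrable_const 1) hx, integral_conjCE hA hH hB hK, integral_condEvent hA hH]
  simp only [integral_const, probReal_univ, one_smul]
  field_simp
  ring

lemma conjPrev_le_condProb [IsFiniteMeasure P] (hA : MeasurableSet A) (hH : MeasurableSet H)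
    (hB : MeasurableSet B) (hK : MeasurableSet K) :
    conjPrev P A H B K ≤ condProb P B K := by
  have hHK := hH.union hK
  refine div_le_of_le_mul₀ measureReal_nonneg (condProb_nonneg P B K) ?_
  calc ∫ ω, min (condEvent P A H ω) (condEvent P B K ω) * ind (H ∪ K) ω ∂P
      ≤ ∫ ω, condEvent P B K ω * ind (H ∪ K) ω ∂P :=
        integral_mono (integrable_min_condEvent_mul_ind hA hH hB hK hHK)
          (by rw [mul_ind_eq_indicator]; exact (integrable_condEvent hB hK).indicator hHK)
          fun ω => mul_le_mul_of_nonneg_right (min_le_right _ _) (by simp [ind, indicator_nonneg])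
    _ = condProb P B K * P.real (H ∪ K) :=
        integral_condEvent_mul_ind hB hK hHK subset_union_right

end Lemmas

theorem le_of_iterCond_eq_one_general (P : Measure Ω) [IsProbabilityMeasure P]
    (A H B K : Set Ω)
    (hAm : MeasurableSet A) (hHm : MeasurableSet H)
    (hBm : MeasurableSet B) (hKm : MeasurableSet K)
    (hAH : 0 < P (A ∩ H))
    (hiter : ∀ ω, iterCond P A H B K ω = 1) :
    condProb P A H ≤ condProb P B K := by
  have hp : condProb P A H ≠ 0 := (condProb_pos hAH).ne'
  have hz : conjPrev P A H B K = condProb P A H := by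
    have h := integral_iterCond hAm hHm hBm hKm hp
    simp only [hiter, integral_const, probReal_univ, one_smul] at h
    exact (div_eq_one_iff_eq hp).mp h.symm
  exact hz ▸ conjPrev_le_condProb hAm hHm hBm hKm

/-- Converse direction: if the iterated conditional `⟦(B|K)|(A|H)⟧` is
constantly `1`, then `P(A|H) ≤ P(B|K)`. -/
theorem le_of_iterCond_eq_one (P : Measure Ω) [IsProbabilityMeasure P]
    (A H B K : Set Ω)
    (hAm : MeasurableSet A) (hHm : MeasurableSet H)
    (hBm : MeasurableSet B) (hKm : MeasurableSet K)
    (hH : 0 < P H) (hK : 0 < P K) (hAH : 0 < P (A ∩ H))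
    (hiter : ∀ ω, iterCond P A H B K ω = 1) :
    condProb P A H ≤ condProb P B K :=
  le_of_iterCond_eq_one_general P A H B K hAm hHm hBm hKm hAH hiter

end
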